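/- Let B be an n×n real symmetric positive definite matrix and let P_1, …, P_n be the associated lumped preconditioners. Then for every i = 1, …, n, all generalized eigenvalues of the pencil (B, P_i) lie in (0, 1]; moreover, if B has all entries nonnegative, then the largest generalized eigenvalue of (B, P_i) equals 1 (the all-ones vector e satisfies B e = P_i e). -/

import Mathlib

open Matrix

/-- The Euclidean norm of a vector. -/
noncomputable def enorm {m : Type*} [Fintype m] (v : m → ℝ) : ℝ :=
  Real.sqrt (∑ i, (v i) ^ 2)

/-- The square root of a positive semidefinite matrix, as `Matrix.PosSemidef.sqrt` was defined
in the older Mathlib (removed since). -/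
noncomputable def Matrix.PosSemidef.sqrt {m : Type*} [Fintype m] [DecidableEq m]
    {A : Matrix m m ℝ} (hA : A.PosSemidef) : Matrix m m ℝ :=
  (hA.1.eigenvectorUnitary : Matrix m m ℝ) * diagonal ((↑) ∘ (√·) ∘ hA.1.eigenvalues) *
    (star hA.1.eigenvectorUnitary : Matrix m m ℝ)

theorem Matrix.PosSemidef.sqrt_isHermitian {m : Type*} [Fintype m] [DecidableEq m]
    {A : Matrix m m ℝ} (hA : A.PosSemidef) : hA.sqrt.IsHermitian := by
  show hA.sqrtᴴ = hA.sqrt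
  simp only [Matrix.PosSemidef.sqrt, conjTranspose_mul, diagonal_conjTranspose, Matrix.mul_assoc,
    Matrix.star_eq_conjTranspose, conjTranspose_conjTranspose]
  simp [Function.comp_def]

/-- The `k`-th smallest generalized eigenvalue (counted with multiplicity) of the
symmetric pencil `(A, B)` with `B` positive definite, i.e. the `k`-th smallest root of
`det (A - λ B) = 0`.  It is defined as the `k`-th smallest eigenvalue of the Hermitian
matrix `√(B⁻¹) * A * √(B⁻¹)`, which is similar to `B⁻¹ * A`.  Junk value `0` is returned
if `A` is not symmetric or `B` is not positive definite. -/
noncomputable def genEig {m : Type*} [Fintype m] [DecidableEq m]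
    (A B : Matrix m m ℝ) (k : Fin (Fintype.card m)) : ℝ :=
  letI := Classical.propDecidable
  if h : A.IsHermitian ∧ B.PosDef then
    let S : Matrix m m ℝ := (h.2.inv).posSemidef.sqrt
    have hS : S.IsHermitian := (h.2.inv).posSemidef.sqrt_isHermitian
    have hC : (S * A * S).IsHermitian := by
      show (S * A * S)ᴴ = S * A * S
      rw [conjTranspose_mul, conjTranspose_mul, hS.eq, h.1.eq, Matrix.mul_assoc]
    let f : Fin (Fintype.card m) → ℝ := hC.eigenvalues₀
    f (Tuple.sort f k)
  else 0

/-- The `k`-th smallest generalized eigenvalue of a pencil of `n × n` matrices,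
indexed by `Fin n`.  `genEigFin A B 0` is the smallest one, `λ_1(A,B)`, and
`genEigFin A B (Fin.last _)` is the largest one, `λ_n(A,B)`. -/
noncomputable def genEigFin {n : ℕ} (A B : Matrix (Fin n) (Fin n) ℝ) (k : Fin n) : ℝ :=
  genEig A B (Fin.cast (Fintype.card_fin n).symm k)

/-- The (row-sum) lumping operator: `lump B` is the diagonal matrix whose `i`-th
diagonal entry is the sum of the absolute values of the entries of the `i`-th row of `B`. -/
noncomputable def lump {m : Type*} [Fintype m] [DecidableEq m]
    (B : Matrix m m ℝ) : Matrix m m ℝ :=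
  Matrix.diagonal fun i => ∑ j, |B i j|

/-- The banded part `D_i` of a matrix: it keeps all sub- and super-diagonals of index
smaller than `i` (i.e. the entries with `|j - k| < i`) and sets the rest to zero. -/
def diagBand {n : ℕ} (B : Matrix (Fin n) (Fin n) ℝ) (i : ℕ) : Matrix (Fin n) (Fin n) ℝ :=
  Matrix.of fun j k => if |((j : ℕ) : ℤ) - ((k : ℕ) : ℤ)| < (i : ℤ) then B j k else 0

/-- The lumped preconditioner `P_i = D_i + 𝓛(R_i)` where `B = D_i + R_i`, `D_i` being the
banded part of `B` of bandwidth `i` and `R_i` the remainder. -/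
noncomputable def precond {n : ℕ} (B : Matrix (Fin n) (Fin n) ℝ) (i : ℕ) :
    Matrix (Fin n) (Fin n) ℝ :=
  diagBand B i + lump (B - diagBand B i)

/-! A generalized eigenvalue `μ` of `(B, P)` comes with a vector `v ≠ 0` such that
`B v = μ P v`, hence `v ⬝ Bv = μ (v ⬝ Pv)`: positivity of `B` and `P` gives `μ > 0`, and `μ ≤ 1`
as soon as `P - B` is positive semidefinite. For `P = P_i` one has `P_i - B = 𝓛(R_i) - R_i`,
which is positive semidefinite for every symmetric `R` because `2 r a b ≤ |r| (a² + b²)` summed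
over the entries of `R` gives `2 x ⬝ Rx ≤ 2 x ⬝ 𝓛(R) x`. If `B ≥ 0` then also `R_i ≥ 0`, so
`𝓛(R_i) e = R_i e`, i.e. `P_i e = B e`, and the bound `1` is attained. -/

namespace Matrix

variable {m : Type*} [Fintype m] [DecidableEq m]

lemma mem_spectrum_iff_exists_mulVec_eq_smul {K : Type*} [Field K] {A : Matrix m m K} {μ : K} :
    μ ∈ spectrum K A ↔ ∃ v ≠ 0, A *ᵥ v = μ • v := by
  rw [← spectrum_toLin', ← Module.End.hasEigenvalue_iff_mem_spectrum,
    Module.End.hasEigenvalue_iff, Submodule.ne_bot_iff]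
  simp only [Module.End.mem_eigenspace_iff, toLin'_apply, and_comm]

lemma PosSemidef.posSemidef_sqrt {A : Matrix m m ℝ} (hA : A.PosSemidef) : hA.sqrt.PosSemidef := by
  unfold PosSemidef.sqrt
  have hD : (diagonal ((↑) ∘ (√·) ∘ hA.1.eigenvalues) : Matrix m m ℝ).PosSemidef :=
    PosSemidef.diagonal fun i => by simp [Real.sqrt_nonneg]
  simpa [star_eq_conjTranspose] using
    hD.mul_mul_conjTranspose_same (hA.1.eigenvectorUnitary : Matrix m m ℝ)

lemma PosSemidef.sqrt_mul_self {A : Matrix m m ℝ} (hA : A.PosSemidef) : hA.sqrt * hA.sqrt = A := by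
  set U : Matrix m m ℝ := (hA.1.eigenvectorUnitary : Matrix m m ℝ)
  set D : Matrix m m ℝ := diagonal ((↑) ∘ (√·) ∘ hA.1.eigenvalues)
  have hUU : star U * U = 1 := Unitary.coe_star_mul_self _
  have hDD : D * D = diagonal (RCLike.ofReal ∘ hA.1.eigenvalues) := by
    simp only [D, diagonal_mul_diagonal]
    congr 1
    funext i
    simp [Real.mul_self_sqrt (hA.eigenvalues_nonneg i)]
  conv_rhs => rw [hA.1.spectral_theorem, Unitary.conjStarAlgAut_apply]
  calc U * D * star U * (U * D * star U) = U * D * (star U * U) * D * star U := by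
        simp only [Matrix.mul_assoc]
    _ = U * (D * D) * star U := by rw [hUU, Matrix.mul_one, Matrix.mul_assoc U D D]
    _ = _ := by rw [hDD]

/-- The substitution `v = S u`. -/
lemma exists_mulVec_eq_smul_conj_iff {A P S : Matrix m m ℝ} (hS : IsUnit S)
    (hSPS : S * P * S = 1) {μ : ℝ} :
    (∃ u ≠ 0, (S * A * S) *ᵥ u = μ • u) ↔ ∃ v ≠ 0, A *ᵥ v = μ • (P *ᵥ v) := by
  have hinj : Function.Injective (S *ᵥ ·) := mulVec_injective_iff_isUnit.mpr hS
  have hSu : ∀ u, S *ᵥ u = 0 ↔ u = 0 := fun u => hinj.eq_iff' (mulVec_zero S)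
  have key : ∀ u, (S * A * S) *ᵥ u = μ • u ↔ A *ᵥ (S *ᵥ u) = μ • (P *ᵥ (S *ᵥ u)) := fun u => by
    conv_lhs => rw [← one_mulVec (μ • u), ← hSPS]
    rw [← mulVec_smul, ← mulVec_mulVec, ← mulVec_mulVec, Matrix.mul_assoc, ← mulVec_mulVec,
      ← mulVec_mulVec, hinj.eq_iff, mulVec_smul]
  constructor
  · rintro ⟨u, hu, h⟩
    exact ⟨S *ᵥ u, (hSu u).not.mpr hu, (key u).mp h⟩
  · rintro ⟨v, hv, h⟩
    obtain ⟨u, rfl⟩ : ∃ u, S *ᵥ u = v :=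
      ⟨(P * S) *ᵥ v, by rw [mulVec_mulVec, ← Matrix.mul_assoc, hSPS, one_mulVec]⟩
    exact ⟨u, fun hu => hv (by rw [hu, mulVec_zero]), (key u).mpr h⟩

end Matrix

section GeneralizedEigenvalues

variable {m : Type*} [Fintype m] [DecidableEq m] {A P : Matrix m m ℝ}

lemma mem_range_genEig_iff (hA : A.IsHermitian) (hP : P.PosDef) {μ : ℝ} :
    μ ∈ Set.range (genEig A P) ↔ ∃ v ≠ 0, A *ᵥ v = μ • (P *ᵥ v) := by
  -- `genEig` computes with classical decidability, whatever instance it is given.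
  obtain rfl : ‹DecidableEq m› = fun a b => Classical.propDecidable (a = b) :=
    Subsingleton.elim _ _
  classical
  unfold genEig
  simp only [dif_pos (And.intro hA hP)]
  set S : Matrix m m ℝ := hP.inv.posSemidef.sqrt
  have hSSP : S * (S * P) = 1 := by
    rw [← Matrix.mul_assoc, hP.inv.posSemidef.sqrt_mul_self,
      nonsing_inv_mul _ hP.det_pos.ne'.isUnit]
  have hSPS : S * P * S = 1 := mul_eq_one_comm.mp hSSP
  have hC : (S * A * S).IsHermitian := by
    rw [IsHermitian, conjTranspose_mul, conjTranspose_mul, hA.eq,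
      hP.inv.posSemidef.posSemidef_sqrt.isHermitian.eq, Matrix.mul_assoc]
  have hrange : Set.range (fun k => hC.eigenvalues₀ (Tuple.sort hC.eigenvalues₀ k)) =
      Set.range hC.eigenvalues :=
    (EquivLike.range_comp hC.eigenvalues₀ _).trans (EquivLike.range_comp hC.eigenvalues₀ _).symm
  rw [hrange, ← hC.spectrum_real_eq_range_eigenvalues, mem_spectrum_iff_exists_mulVec_eq_smul,
    exists_mulVec_eq_smul_conj_iff (IsUnit.of_mul_eq_one _ hSSP) hSPS]

lemma exists_dotProduct_mulVec_eq_genEig_mul (hA : A.IsHermitian) (hP : P.PosDef)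
    (k : Fin (Fintype.card m)) :
    ∃ v ≠ 0, v ⬝ᵥ (A *ᵥ v) = genEig A P k * (v ⬝ᵥ (P *ᵥ v)) := by
  obtain ⟨v, hv, h⟩ := (mem_range_genEig_iff hA hP).mp ⟨k, rfl⟩
  exact ⟨v, hv, by rw [h, dotProduct_smul, smul_eq_mul]⟩

lemma genEig_pos (hA : A.PosDef) (hP : P.PosDef) (k : Fin (Fintype.card m)) :
    0 < genEig A P k := by
  obtain ⟨v, hv, h⟩ := exists_dotProduct_mulVec_eq_genEig_mul hA.isHermitian hP k
  have hAv := hA.dotProduct_mulVec_pos hv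
  have hPv := hP.dotProduct_mulVec_pos hv
  rw [star_trivial] at hAv hPv
  exact pos_of_mul_pos_left (h ▸ hAv) hPv.le

lemma genEig_le_one (hA : A.IsHermitian) (hP : P.PosDef) (hPA : (P - A).PosSemidef)
    (k : Fin (Fintype.card m)) : genEig A P k ≤ 1 := by
  obtain ⟨v, hv, h⟩ := exists_dotProduct_mulVec_eq_genEig_mul hA hP k
  have hPv := hP.dotProduct_mulVec_pos hv
  have hPAv := hPA.dotProduct_mulVec_nonneg v
  rw [star_trivial] at hPv hPAv
  rw [sub_mulVec, dotProduct_sub, h] at hPAv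
  nlinarith

lemma isGreatest_range_genEig_one (hA : A.IsHermitian) (hP : P.PosDef)
    (hPA : (P - A).PosSemidef) {v : m → ℝ} (hv : v ≠ 0) (hAv : A *ᵥ v = P *ᵥ v) :
    IsGreatest (Set.range (genEig A P)) 1 :=
  ⟨(mem_range_genEig_iff hA hP).mpr ⟨v, hv, by rw [hAv, one_smul]⟩,
    by rintro _ ⟨k, rfl⟩; exact genEig_le_one hA hP hPA k⟩

lemma range_genEigFin {n : ℕ} (A P : Matrix (Fin n) (Fin n) ℝ) :
    Set.range (genEigFin A P) = Set.range (genEig A P) :=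
  EquivLike.range_comp (genEig A P) (finCongr (Fintype.card_fin n).symm)

end GeneralizedEigenvalues

lemma two_mul_mul_le_abs_mul_sq_add_sq (r a b : ℝ) : 2 * (r * (a * b)) ≤ |r| * (a ^ 2 + b ^ 2) := by
  nlinarith [mul_nonneg (sub_nonneg.2 (neg_abs_le r)) (sq_nonneg (a - b)),
    mul_nonneg (sub_nonneg.2 (le_abs_self r)) (sq_nonneg (a + b))]

section Lumping

variable {m : Type*} [Fintype m] [DecidableEq m]

lemma dotProduct_lump_mulVec (R : Matrix m m ℝ) (x : m → ℝ) :
    x ⬝ᵥ (lump R *ᵥ x) = ∑ j, ∑ k, |R j k| * x j ^ 2 := by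
  simp only [lump, dotProduct, mulVec_diagonal, Finset.sum_mul, Finset.mul_sum]
  exact Finset.sum_congr rfl fun j _ => Finset.sum_congr rfl fun k _ => by ring

lemma lump_sub_posSemidef {R : Matrix m m ℝ} (hR : R.IsHermitian) : (lump R - R).PosSemidef := by
  refine posSemidef_iff_dotProduct_mulVec.mpr ⟨(isHermitian_diagonal _).sub hR, fun x => ?_⟩
  have hswap : ∑ j, ∑ k, |R j k| * x k ^ 2 = ∑ j, ∑ k, |R j k| * x j ^ 2 := by
    rw [Finset.sum_comm]
    exact Finset.sum_congr rfl fun j _ => Finset.sum_congr rfl fun k _ => by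
      rw [← hR.apply j k, star_trivial]
  have hquad : 2 * (x ⬝ᵥ (R *ᵥ x)) ≤ 2 * (x ⬝ᵥ (lump R *ᵥ x)) :=
    calc 2 * (x ⬝ᵥ (R *ᵥ x)) = ∑ j, ∑ k, 2 * (R j k * (x j * x k)) := by
          simp only [dotProduct, mulVec, Finset.mul_sum]
          exact Finset.sum_congr rfl fun j _ => Finset.sum_congr rfl fun k _ => by ring
      _ ≤ ∑ j, ∑ k, |R j k| * (x j ^ 2 + x k ^ 2) :=
          Finset.sum_le_sum fun j _ => Finset.sum_le_sum fun k _ =>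
            two_mul_mul_le_abs_mul_sq_add_sq _ _ _
      _ = 2 * (x ⬝ᵥ (lump R *ᵥ x)) := by
          simp only [mul_add, Finset.sum_add_distrib, hswap, dotProduct_lump_mulVec]
          ring
  rw [star_trivial, sub_mulVec, dotProduct_sub]
  linarith

lemma lump_mulVec_one_of_nonneg {R : Matrix m m ℝ} (hR : ∀ p q, 0 ≤ R p q) :
    lump R *ᵥ (fun _ => (1 : ℝ)) = R *ᵥ (fun _ => (1 : ℝ)) := by
  ext j
  rw [lump, mulVec_diagonal]
  simp only [mulVec, dotProduct, mul_one, abs_of_nonneg (hR _ _)]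

end Lumping

section Preconditioner

variable {n : ℕ} {B : Matrix (Fin n) (Fin n) ℝ}

lemma diagBand_isHermitian (hB : B.IsHermitian) (i : ℕ) : (diagBand B i).IsHermitian := by
  ext j k
  simp only [conjTranspose_apply, diagBand, of_apply, star_trivial, abs_sub_comm (k : ℤ),
    ← hB.apply j k]

lemma sub_diagBand_nonneg (hB : ∀ p q, 0 ≤ B p q) (i : ℕ) (p q : Fin n) :
    0 ≤ (B - diagBand B i) p q := by
  simp only [Matrix.sub_apply, diagBand, of_apply]
  split_ifs
  · simp
  · simpa using hB p q

lemma precond_sub_posSemidef (hB : B.IsHermitian) (i : ℕ) : (precond B i - B).PosSemidef := by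
  have h : precond B i - B = lump (B - diagBand B i) - (B - diagBand B i) := by
    rw [precond]; abel
  exact h ▸ lump_sub_posSemidef (hB.sub (diagBand_isHermitian hB i))

lemma precond_posDef (hB : B.PosDef) (i : ℕ) : (precond B i).PosDef := by
  simpa using hB.add_posSemidef (precond_sub_posSemidef hB.isHermitian i)

lemma mulVec_one_eq_precond_mulVec_one (hB : ∀ p q, 0 ≤ B p q) (i : ℕ) :
    B *ᵥ (fun _ => (1 : ℝ)) = precond B i *ᵥ (fun _ => (1 : ℝ)) := by
  rw [precond, add_mulVec, lump_mulVec_one_of_nonneg (sub_diagBand_nonneg hB i), ← add_mulVec,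
    add_sub_cancel]

end Preconditioner

/-- all generalized eigenvalues of `(B, P_i)` lie in `(0, 1]`;
if moreover `B` is nonnegative then the largest one equals `1` and `B e = P_i e`. -/
theorem stmt_17 {n : ℕ} (B : Matrix (Fin (n + 1)) (Fin (n + 1)) ℝ) (hB : B.PosDef) :
    (∀ i : ℕ, 1 ≤ i → i ≤ n + 1 → ∀ k : Fin (n + 1),
      0 < genEigFin B (precond B i) k ∧ genEigFin B (precond B i) k ≤ 1) ∧
    ((∀ p q, 0 ≤ B p q) → ∀ i : ℕ, 1 ≤ i → i ≤ n + 1 →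
      IsGreatest (Set.range (genEigFin B (precond B i))) 1 ∧
      B *ᵥ (fun _ => (1 : ℝ)) = precond B i *ᵥ (fun _ => (1 : ℝ))) := by
  have hP : ∀ i, (precond B i).PosDef := precond_posDef hB
  have hPB : ∀ i, (precond B i - B).PosSemidef := precond_sub_posSemidef hB.isHermitian
  refine ⟨fun i _ _ k => ⟨genEig_pos hB (hP i) _, genEig_le_one hB.isHermitian (hP i) (hPB i) _⟩,
    fun hBnn i _ _ => ?_⟩
  have hone := mulVec_one_eq_precond_mulVec_one hBnn i
  refine ⟨?_, hone⟩
  rw [range_genEigFin]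
  exact isGreatest_range_genEig_one hB.isHermitian (hP i) (hPB i)
    (Function.ne_iff.mpr ⟨0, one_ne_zero⟩) hone
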